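/- Let K, r ≥ 1 and M be integers with (r+1)K − 1 ≤ M, let θ_1,…,θ_K be distinct numbers in (0,1), and let β_{jl} ∈ ℝ for 1 ≤ j ≤ K and 0 ≤ l ≤ r. If Σ_{j=1}^K Σ_{l=0}^r β_{jl} (M)_l w^l (1 + wθ_j)^{M−l} = 0 for all w ∈ ℝ, then β_{jl} = 0 for all j and l. -/

import Mathlib

/-!
The summand `(M)_l w^l (1 + wθ)^(M-l)` is the `l`-th derivative in `θ` of `(1 + θw)^M`, so the
hypothesis says that the functional `Λ p = ∑ β_jl p^(l)(θ_j)` on polynomials in `θ` kills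
`(1 + θw)^M` for every `w`. Expanding binomially and comparing coefficients in `w`, `Λ` kills every
`θ^k` with `k ≤ M`, hence every polynomial of degree `< K(r+1) ≤ M + 1`. On that space the Hermite
map `p ↦ (p^(l)(θ_j))_(j,l)` is injective, since a nonzero kernel element is divisible by
`∏ (X - θ_j)^(r+1)`; counting dimensions it is bijective (this is the invertibility of the
confluent Vandermonde matrix). Evaluating `Λ` at the Hermite interpolant of a unit vector isolates
each `β_jl`.
-/

namespace Polynomial

theorem iterate_derivative_one_add_C_mul_X_pow {R : Type*} [CommSemiring R] (w : R) (M l : ℕ) :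
    derivative^[l] ((1 + C w * X) ^ M) =
      C (M.descFactorial l * w ^ l) * (1 + C w * X) ^ (M - l) := by
  induction l with
  | zero => simp
  | succ l ih =>
    rw [Function.iterate_succ_apply', ih, derivative_C_mul, derivative_pow]
    simp only [map_mul, map_natCast, map_pow, Nat.sub_sub, derivative_add, derivative_one,
      derivative_mul, derivative_C, zero_mul, derivative_X, mul_one, zero_add,
      Nat.descFactorial_succ, Nat.cast_mul]
    ring

theorem map_one_add_C_mul_X_pow_eq_eval {R : Type*} [CommSemiring R] (φ : R[X] →ₗ[R] R)
    (M : ℕ) (w : R) :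
    φ ((1 + C w * X) ^ M) =
      (∑ k ∈ Finset.range (M + 1), C (M.choose k * φ (X ^ k)) * X ^ k).eval w := by
  rw [add_comm, add_pow]
  simp only [eval_finsetSum, map_sum, eval_mul, eval_C, eval_X_pow, one_pow, mul_one, mul_pow,
    ← C_pow]
  refine Finset.sum_congr rfl fun k _ => ?_
  rw [← map_natCast C, mul_comm, ← mul_assoc, ← C_mul, ← smul_eq_C_mul, map_smul, smul_eq_mul]
  ring

theorem degreeLT_succ_le_ker_of_map_one_add_C_mul_X_pow_eq_zero {R : Type*} [CommRing R]
    [IsDomain R] [CharZero R] (φ : R[X] →ₗ[R] R) (M : ℕ)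
    (h : ∀ w : R, φ ((1 + C w * X) ^ M) = 0) :
    degreeLT R (M + 1) ≤ LinearMap.ker φ := by
  classical
  have hQ : ∑ k ∈ Finset.range (M + 1), C (M.choose k * φ (X ^ k)) * X ^ k = 0 :=
    Polynomial.funext fun w => by rw [← map_one_add_C_mul_X_pow_eq_eval, h, eval_zero]
  rw [degreeLT_eq_span_X_pow, Submodule.span_le]
  intro q hq
  obtain ⟨k, hk, rfl⟩ := Finset.mem_image.1 hq
  have hcoeff := congrArg (coeff · k) hQ
  simp only [finsetSum_coeff, coeff_C_mul_X_pow, Finset.sum_ite_eq, if_pos hk] at hcoeff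
  rw [SetLike.mem_coe, LinearMap.mem_ker]
  exact (mul_eq_zero.1 hcoeff).resolve_left (Nat.cast_ne_zero.2 (Nat.choose_pos
    (Nat.lt_succ_iff.1 (Finset.mem_range.1 hk))).ne')

variable {F ι : Type*} [Field F]

noncomputable def hermiteData (θ : ι → F) (r : ℕ) : F[X] →ₗ[F] ι → Fin (r + 1) → F :=
  LinearMap.pi fun j => LinearMap.pi fun l => leval (θ j) ∘ₗ derivative ^ (l : ℕ)

@[simp]
theorem hermiteData_apply (θ : ι → F) (r : ℕ) (p : F[X]) (j : ι) (l : Fin (r + 1)) :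
    hermiteData θ r p j l = (derivative^[l] p).eval (θ j) := by
  simp [hermiteData, Module.End.pow_apply]

variable [Fintype ι]

theorem eq_zero_of_hermiteData_eq_zero [CharZero F] {θ : ι → F} (hθ : θ.Injective) {r : ℕ}
    {p : F[X]} (hp : p ∈ degreeLT F (Fintype.card ι * (r + 1))) (h : hermiteData θ r p = 0) :
    p = 0 := by
  by_contra hp0
  have hdvd : ∀ j, (X - C (θ j)) ^ (r + 1) ∣ p := fun j => by
    rw [← le_rootMultiplicity_iff hp0]
    exact lt_rootMultiplicity_of_isRoot_iterate_derivative hp0 fun l hl => by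
      simpa using congrFun (congrFun h j) ⟨l, by omega⟩
  have hprod : ∏ j, (X - C (θ j)) ^ (r + 1) ∣ p :=
    Fintype.prod_dvd_of_coprime ((pairwise_coprime_X_sub_C hθ).mono fun _ _ h => h.pow) hdvd
  have hdeg := natDegree_le_of_dvd hprod hp0
  rw [natDegree_prod_of_monic _ _ fun j _ => (monic_X_sub_C _).pow _] at hdeg
  simp only [natDegree_pow, natDegree_X_sub_C, Finset.sum_const, Finset.card_univ,
    smul_eq_mul, mul_one] at hdeg
  rw [mem_degreeLT, degree_eq_natDegree hp0] at hp
  norm_cast at hp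
  omega

theorem hermiteData_domRestrict_surjective [CharZero F] {θ : ι → F} (hθ : θ.Injective) (r : ℕ) :
    Function.Surjective
      ((hermiteData θ r).domRestrict (degreeLT F (Fintype.card ι * (r + 1)))) := by
  rw [← LinearMap.injective_iff_surjective_of_finrank_eq_finrank]
  · rw [← LinearMap.ker_eq_bot, LinearMap.ker_eq_bot']
    intro p hp
    exact Subtype.ext (eq_zero_of_hermiteData_eq_zero hθ p.2 hp)
  · rw [(degreeLTEquiv F _).finrank_eq]
    simp [Module.finrank_pi_fintype]

noncomputable def hermiteFunctional {r : ℕ} (θ : ι → F) (β : ι → Fin (r + 1) → F) :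
    F[X] →ₗ[F] F :=
  ∑ j, ∑ l, β j l • (leval (θ j) ∘ₗ derivative ^ (l : ℕ))

theorem hermiteFunctional_apply {r : ℕ} (θ : ι → F) (β : ι → Fin (r + 1) → F) (p : F[X]) :
    hermiteFunctional θ β p = ∑ j, ∑ l, β j l * (derivative^[l] p).eval (θ j) := by
  simp [hermiteFunctional, Module.End.pow_apply]

theorem eq_zero_of_degreeLT_le_ker_hermiteFunctional [CharZero F] {r : ℕ} {θ : ι → F}
    (hθ : θ.Injective) (β : ι → Fin (r + 1) → F)
    (h : degreeLT F (Fintype.card ι * (r + 1)) ≤ LinearMap.ker (hermiteFunctional θ β)) :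
    β = 0 := by
  classical
  funext j l
  obtain ⟨⟨p, hp⟩, hpd⟩ := hermiteData_domRestrict_surjective hθ r
    (Pi.single j (Pi.single l 1 : Fin (r + 1) → F))
  have hd : ∀ j' (l' : Fin (r + 1)), (derivative^[l'] p).eval (θ j') =
      (Pi.single j (Pi.single l 1 : Fin (r + 1) → F) : ι → Fin (r + 1) → F) j' l' :=
    fun j' l' => by rw [← hpd]; simp
  have hΛ := h hp
  rw [LinearMap.mem_ker, hermiteFunctional_apply] at hΛ
  simpa [hd, Pi.single_apply, ite_apply] using hΛ

end Polynomial

open Polynomial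

theorem binomial_generating_function_lemma_general
    (K r M : ℕ) (hM : (r + 1) * K - 1 ≤ M)
    (θ : Fin K → ℝ) (hθinj : Function.Injective θ)
    (β : Fin K → Fin (r + 1) → ℝ)
    (h : ∀ w : ℝ,
      ∑ j, ∑ l : Fin (r + 1),
        β j l * (M.descFactorial (l : ℕ) : ℝ) * w ^ (l : ℕ) * (1 + w * θ j) ^ (M - (l:ℕ))
        = 0) :
    ∀ j l, β j l = 0 := by
  have hψ : ∀ w : ℝ, hermiteFunctional θ β ((1 + C w * X) ^ M) = 0 := fun w => by
    rw [hermiteFunctional_apply, ← h w]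
    simp only [iterate_derivative_one_add_C_mul_X_pow, eval_mul, eval_C, eval_pow, eval_add,
      eval_one, eval_X, mul_assoc]
  have hdim : Fintype.card (Fin K) * (r + 1) ≤ M + 1 := by
    rw [Fintype.card_fin, mul_comm]; exact Nat.sub_le_iff_le_add.1 hM
  have hβ := eq_zero_of_degreeLT_le_ker_hermiteFunctional hθinj β
    ((degreeLT_mono hdim).trans (degreeLT_succ_le_ker_of_map_one_add_C_mul_X_pow_eq_zero _ M hψ))
  intro j l
  simp [hβ]

/-- **The key algebraic lemma in the proof of Proposition 1 of the Group-Sort-Fuse paper.**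
Let `K, r ≥ 1` and `M` be integers with `(r+1)K − 1 ≤ M`, let `θ_1, …, θ_K` be distinct
numbers in `(0,1)`, and let `β_{jl} ∈ ℝ` for `1 ≤ j ≤ K`, `0 ≤ l ≤ r`. If
`∑_{j=1}^K ∑_{l=0}^r β_{jl} (M)_l w^l (1 + w θ_j)^{M−l} = 0` for all `w ∈ ℝ`
(where `(M)_l = M!/(M−l)!` is the falling factorial), then `β_{jl} = 0` for all `j, l`. -/
theorem binomial_generating_function_lemma
    (K r M : ℕ) (hK : 1 ≤ K) (hr : 1 ≤ r) (hM : (r + 1) * K - 1 ≤ M)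
    (θ : Fin K → ℝ) (hθmem : ∀ j, θ j ∈ Set.Ioo (0:ℝ) 1) (hθinj : Function.Injective θ)
    (β : Fin K → Fin (r + 1) → ℝ)
    (h : ∀ w : ℝ,
      ∑ j, ∑ l : Fin (r + 1),
        β j l * (M.descFactorial (l : ℕ) : ℝ) * w ^ (l : ℕ) * (1 + w * θ j) ^ (M - (l:ℕ))
        = 0) :
    ∀ j l, β j l = 0 :=
  binomial_generating_function_lemma_general K r M hM θ hθinj β h
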